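/- arXiv:1105.1123 — 7 statements merged into one kernel-verified Lean document; each statement's English description precedes it below -/
import Mathlib

section
/- Let L be a finite-dimensional nilpotent Lie algebra over ℂ, V an L-module, and suppose I ⊆ L is an ideal such that some nonzero v ∈ V satisfies I·v = 0. If X ∈ L acts locally nilpotently on V, then there exists a nonzero w ∈ V with I·w = 0 and X·w = 0. -/
/-! If `f = ⁅X, ·⁆` and `f^[m] v = 0`, take the last nonzero iterate `w = f^[n] v`; then `f w = 0`.
The vectors annihilated by an ideal `I` are stable under `f`, since `⁅y, ⁅X, u⁆⁆ = ⁅⁅y, X⁆, u⁆ + ⁅X, ⁅y, u⁆⁆`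
and `⁅y, X⁆ ∈ I`; so `w` is still annihilated by `I`. -/

theorem LieIdeal.lie_lie_eq_zero_of_forall_lie_eq_zero {R L M : Type*} [CommRing R] [LieRing L]
    [LieAlgebra R L] [AddCommGroup M] [LieRingModule L M] (I : LieIdeal R L) (X : L) {u : M}
    (hu : ∀ y ∈ I, ⁅y, u⁆ = 0) : ∀ y ∈ I, ⁅y, ⁅X, u⁆⁆ = 0 := by
  intro y hy
  rw [leibniz_lie, hu _ (lie_mem_left R L I y X hy), hu y hy, lie_zero, add_zero]

theorem stmt0_general (L : Type*) [LieRing L] [LieAlgebra ℂ L]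
    (V : Type*) [AddCommGroup V] [LieRingModule L V]
    (I : LieIdeal ℂ L) (v : V) (hv : v ≠ 0) (hIv : ∀ y ∈ I, ⁅y, v⁆ = 0)
    (X : L) (hX : ∀ u : V, ∃ m : ℕ, (fun u : V => ⁅X, u⁆)^[m] u = 0) :
    ∃ w : V, w ≠ 0 ∧ (∀ y ∈ I, ⁅y, w⁆ = 0) ∧ ⁅X, w⁆ = 0 := by
  set f : V → V := fun u : V => ⁅X, u⁆
  obtain ⟨n, hn, hn_succ⟩ :=
    Nat.exists_not_and_succ_of_not_zero_of_exists (p := fun n => f^[n] v = 0) hv (hX v)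
  refine ⟨f^[n] v, hn, ?_, ?_⟩
  · exact Function.Iterate.rec (fun u => ∀ y ∈ I, ⁅y, u⁆ = 0) hIv
      (fun _ => I.lie_lie_eq_zero_of_forall_lie_eq_zero X) n
  · rwa [Function.iterate_succ_apply'] at hn_succ

/-- If `L` is a finite-dimensional nilpotent complex Lie algebra, `V` an
`L`-module, `I` an ideal of `L` annihilating some nonzero `v`, and `X ∈ L` acts locally
nilpotently on `V`, then some nonzero `w` is annihilated by both `I` and `X`. -/
theorem stmt0 (L : Type*) [LieRing L] [LieAlgebra ℂ L]
    [FiniteDimensional ℂ L] [LieRing.IsNilpotent L]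
    (V : Type*) [AddCommGroup V] [Module ℂ V] [LieRingModule L V] [LieModule ℂ L V]
    (I : LieIdeal ℂ L) (v : V) (hv : v ≠ 0) (hIv : ∀ y ∈ I, ⁅y, v⁆ = 0)
    (X : L) (hX : ∀ u : V, ∃ m : ℕ, (fun u : V => ⁅X, u⁆)^[m] u = 0) :
    ∃ w : V, w ≠ 0 ∧ (∀ y ∈ I, ⁅y, w⁆ = 0) ∧ ⁅X, w⁆ = 0 :=
  stmt0_general L V I v hv hIv X hX
end

section
/- Let V be a module over the Virasoro algebra (with basis {e_i : i ∈ ℤ} ∪ {c}, c central, [e_i,e_j] = (j−i)e_{i+j} + δ_{i,−j}(i³−i)/12·c) on which e_1 and e_2 act locally nilpotently, and let v ∈ V be nonzero with e_1·v = 0. Then there exists n ≥ 2 such that e_i·v = 0 for all i > n. -/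
/-! Because `e 1` kills `v`, applying `e 1` repeatedly to `e 2 · v` only acts on `e 2`, and
`(ad e₁)^k e₂ = k! e_{2+k}`; so `e₁^k (e₂ · v) = k! e_{2+k} · v`, and local nilpotency of `e 1`
on `e 2 · v` forces `e_{2+k} · v = 0` for all large `k`. -/

theorem Function.iterate_eq_zero_of_le {M : Type*} [Zero M] {f : M → M} (hf : f 0 = 0)
    {u : M} {m k : ℕ} (hm : f^[m] u = 0) (hmk : m ≤ k) : f^[k] u = 0 := by
  obtain ⟨d, rfl⟩ := Nat.exists_eq_add_of_le' hmk
  rw [Function.iterate_add_apply, hm, Function.iterate_fixed hf]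

theorem iterate_lie_lie_of_lie_eq_zero {L M : Type*} [LieRing L] [AddCommGroup M]
    [LieRingModule L M] (x y : L) {v : M} (hv : ⁅x, v⁆ = 0) (k : ℕ) :
    (fun u : M => ⁅x, u⁆)^[k] ⁅y, v⁆ = ⁅(fun z : L => ⁅x, z⁆)^[k] y, v⁆ := by
  induction k with
  | zero => rfl
  | succ k ih => rw [Function.iterate_succ_apply', Function.iterate_succ_apply', ih,
      leibniz_lie, hv, lie_zero, add_zero]

section Virasoro

variable {L : Type*} [LieRing L] [LieAlgebra ℂ L] {e : ℤ → L} {c : L}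

theorem virasoro_lie_e_one_of_ne (he : ∀ i j : ℤ, ⁅e i, e j⁆ =
      ((j - i : ℤ) : ℂ) • e (i + j) + (if i = -j then ((i : ℂ)^3 - i) / 12 else 0) • c)
    {j : ℤ} (hj : j ≠ -1) : ⁅e 1, e j⁆ = ((j - 1 : ℤ) : ℂ) • e (j + 1) := by
  rw [he, if_neg (by omega), zero_smul, add_zero, add_comm 1 j]

theorem virasoro_iterate_lie_e_one_e_two (he : ∀ i j : ℤ, ⁅e i, e j⁆ =
      ((j - i : ℤ) : ℂ) • e (i + j) + (if i = -j then ((i : ℂ)^3 - i) / 12 else 0) • c)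
    (k : ℕ) : (fun z : L => ⁅e 1, z⁆)^[k] (e 2) = (k.factorial : ℂ) • e (2 + k) := by
  induction k with
  | zero => simp
  | succ k ih =>
    rw [Function.iterate_succ_apply', ih, lie_smul,
      virasoro_lie_e_one_of_ne he (by omega), smul_smul, Nat.factorial_succ]
    congr 2
    push_cast
    ring

end Virasoro

theorem stmt3_general (L : Type*) [LieRing L] [LieAlgebra ℂ L] (e : ℤ → L) (c : L)
    (he : ∀ i j : ℤ, ⁅e i, e j⁆ =
      ((j - i : ℤ) : ℂ) • e (i + j) + (if i = -j then ((i : ℂ)^3 - i) / 12 else 0) • c)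
    (V : Type*) [AddCommGroup V] [Module ℂ V] [LieRingModule L V] [LieModule ℂ L V]
    (h1 : ∀ u : V, ∃ m : ℕ, (fun u : V => ⁅e 1, u⁆)^[m] u = 0)
    (v : V) (hv1 : ⁅e 1, v⁆ = 0) :
    ∃ n : ℤ, 2 ≤ n ∧ ∀ i > n, ⁅e i, v⁆ = 0 := by
  obtain ⟨m, hm⟩ := h1 ⁅e 2, v⁆
  refine ⟨m + 2, by omega, fun i hi => ?_⟩
  obtain ⟨k, rfl⟩ : ∃ k : ℕ, i = 2 + k := ⟨(i - 2).toNat, by omega⟩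
  have hk : (fun u : V => ⁅e 1, u⁆)^[k] ⁅e 2, v⁆ = 0 :=
    Function.iterate_eq_zero_of_le (lie_zero _) hm (by omega)
  rw [iterate_lie_lie_of_lie_eq_zero _ _ hv1, virasoro_iterate_lie_e_one_e_two he, smul_lie,
    smul_eq_zero] at hk
  exact hk.resolve_left (by exact_mod_cast k.factorial_ne_zero)

/-- In a module over the Virasoro algebra on which `e 1` and `e 2` act
locally nilpotently, any nonzero `v` with `e 1 · v = 0` satisfies `e i · v = 0` for all
`i > n`, for some `n ≥ 2`. The Virasoro algebra is encoded by elements `e i` and a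
central `c` of a complex Lie algebra satisfying the defining bracket relations. -/
theorem stmt3 (L : Type*) [LieRing L] [LieAlgebra ℂ L] (e : ℤ → L) (c : L)
    (hc : ∀ x : L, ⁅c, x⁆ = 0)
    (he : ∀ i j : ℤ, ⁅e i, e j⁆ =
      ((j - i : ℤ) : ℂ) • e (i + j) + (if i = -j then ((i : ℂ)^3 - i) / 12 else 0) • c)
    (V : Type*) [AddCommGroup V] [Module ℂ V] [LieRingModule L V] [LieModule ℂ L V]
    (h1 : ∀ u : V, ∃ m : ℕ, (fun u : V => ⁅e 1, u⁆)^[m] u = 0)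
    (h2 : ∀ u : V, ∃ m : ℕ, (fun u : V => ⁅e 2, u⁆)^[m] u = 0)
    (v : V) (hv : v ≠ 0) (hv1 : ⁅e 1, v⁆ = 0) :
    ∃ n : ℤ, 2 ≤ n ∧ ∀ i > n, ⁅e i, v⁆ = 0 :=
  stmt3_general L e c he V h1 v hv1
end

section
/- Let V be a nonzero module over the Virasoro algebra on which every e_i with i > 0 acts locally nilpotently. Then there exists a nonzero v ∈ V such that e_i·v = 0 for all i > 0. -/
/-!
Since `[e₁, e_k] = (k - 1) e_{k+1}`, if `e_k` kills `e₁ w` for all `k ≥ K` then every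
`e_{K+t} w` is a multiple of `e₁ᵗ (e_K w)`, which vanishes for large `t`; by induction on the
nilpotency order of `e₁` on `w`, every vector is killed by all `e_k` with `k` large.
Conversely, if `v ≠ 0` is killed by all `e_j` with `j > k`, then so is every `e_kᵗ v`, because
`[e_j, e_k]` is a multiple of `e_{j+k}`; the last nonzero `e_kᵗ v` is also killed by `e_k`.
Descending from a large `k` to `k = 1` produces the required vector.
-/

open LieModule Filter

section

variable {R L V : Type*} [CommRing R] [LieRing L] [LieAlgebra R L]
  [AddCommGroup V] [Module R V] [LieRingModule L V] [LieModule R L V]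

-- The relations of `n₊`: the central term of the Virasoro bracket vanishes for `i, j > 0`.
variable (R) in
def IsPositiveWittFamily (e : ℤ → L) : Prop :=
  ∀ i j : ℤ, 0 < i → 0 < j → ⁅e i, e j⁆ = ((j - i : ℤ) : R) • e (i + j)

namespace IsPositiveWittFamily

variable {e : ℤ → L}

theorem lie_toEnd_pow_apply_eq_zero (he : IsPositiveWittFamily R e) {k : ℤ} (hk : 0 < k) {v : V}
    (hv : ∀ j, k < j → ⁅e j, v⁆ = 0) (t : ℕ) :
    ∀ j, k < j → ⁅e j, (toEnd R L V (e k) ^ t) v⁆ = 0 := by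
  induction t with
  | zero => simpa using hv
  | succ t ih =>
    intro j hj
    rw [pow_succ', Module.End.mul_apply, toEnd_apply_apply, leibniz_lie, he j k (by omega) hk,
      smul_lie, ih j hj, ih (j + k) (by omega), smul_zero, lie_zero, zero_add]

theorem exists_ne_zero_forall_le_lie_eq_zero (he : IsPositiveWittFamily R e) {k : ℤ} (hk : 0 < k)
    {v : V} (hv₀ : v ≠ 0) (hnil : ∃ m : ℕ, (toEnd R L V (e k) ^ m) v = 0)
    (hv : ∀ j, k < j → ⁅e j, v⁆ = 0) :
    ∃ w : V, w ≠ 0 ∧ ∀ j, k ≤ j → ⁅e j, w⁆ = 0 := by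
  obtain ⟨t, ht, ht'⟩ := Nat.exists_not_and_succ_of_not_zero_of_exists
    (p := fun m ↦ (toEnd R L V (e k) ^ m) v = 0) (by simpa using hv₀) hnil
  refine ⟨_, ht, fun j hj ↦ hj.lt_or_eq.elim (he.lie_toEnd_pow_apply_eq_zero hk hv t j) ?_⟩
  rintro rfl
  rwa [pow_succ', Module.End.mul_apply, toEnd_apply_apply] at ht'

theorem exists_ne_zero_forall_pos_lie_eq_zero (he : IsPositiveWittFamily R e)
    (hnil : ∀ k, 0 < k → ∀ u : V, ∃ m : ℕ, (toEnd R L V (e k) ^ m) u = 0)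
    {K : ℤ} (hK : 1 ≤ K) (h : ∃ v : V, v ≠ 0 ∧ ∀ j, K ≤ j → ⁅e j, v⁆ = 0) :
    ∃ v : V, v ≠ 0 ∧ ∀ j, 0 < j → ⁅e j, v⁆ = 0 := by
  induction K, hK using Int.leInduction with
  | base => exact h
  | succ k hk ih =>
    obtain ⟨v, hv₀, hv⟩ := h
    exact ih (he.exists_ne_zero_forall_le_lie_eq_zero (by omega) hv₀ (hnil k (by omega) v) hv)

theorem smul_lie_add_one (he : IsPositiveWittFamily R e) {k : ℤ} (hk : 1 < k) {w : V}
    (hw : ⁅e k, ⁅e 1, w⁆⁆ = 0) :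
    ((k - 1 : ℤ) : R) • ⁅e (k + 1), w⁆ = ⁅e 1, ⁅e k, w⁆⁆ := by
  rw [← smul_lie, add_comm, ← he 1 k one_pos (by omega), lie_lie, hw, sub_zero]

section Field

variable {𝕜 : Type*} [Field 𝕜] [CharZero 𝕜] [LieAlgebra 𝕜 L] [Module 𝕜 V] [LieModule 𝕜 L V]

theorem lie_add_mem_span_toEnd_pow (he : IsPositiveWittFamily 𝕜 e) {K : ℤ} (hK : 1 < K) {w : V}
    (hw : ∀ k, K ≤ k → ⁅e k, ⁅e 1, w⁆⁆ = 0) (t : ℕ) :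
    ⁅e (K + t), w⁆ ∈ 𝕜 ∙ (toEnd 𝕜 L V (e 1) ^ t) ⁅e K, w⁆ := by
  induction t with
  | zero => simp
  | succ t ih =>
    obtain ⟨a, ha⟩ := Submodule.mem_span_singleton.1 ih
    have hne : ((K + t - 1 : ℤ) : 𝕜) ≠ 0 := by exact_mod_cast (by omega : K + t - 1 ≠ 0)
    refine Submodule.mem_span_singleton.2 ⟨((K + t - 1 : ℤ) : 𝕜)⁻¹ * a, ?_⟩
    rw [Nat.cast_succ, ← add_assoc, ← inv_smul_smul₀ hne ⁅e (K + t + 1), w⁆,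
      he.smul_lie_add_one (by omega) (hw _ (by omega)), ← ha, pow_succ', Module.End.mul_apply,
      toEnd_apply_apply, lie_smul, mul_smul]

theorem eventually_lie_eq_zero (he : IsPositiveWittFamily 𝕜 e)
    (hnil : ∀ u : V, ∃ m : ℕ, (toEnd 𝕜 L V (e 1) ^ m) u = 0) (w : V) :
    ∀ᶠ k in atTop, ⁅e k, w⁆ = 0 := by
  obtain ⟨a, ha⟩ := hnil w
  induction a generalizing w with
  | zero => simp_all
  | succ a ih =>
    rw [pow_succ, Module.End.mul_apply, toEnd_apply_apply] at ha
    obtain ⟨K, hK⟩ := eventually_atTop.1 ((ih _ ha).and (eventually_ge_atTop 2))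
    obtain ⟨n, hn⟩ := hnil ⁅e K, w⁆
    refine eventually_atTop.2 ⟨K + n, fun k hk ↦ ?_⟩
    obtain ⟨t, rfl⟩ : ∃ t : ℕ, k = K + (t + n : ℕ) := ⟨(k - K - n).toNat, by omega⟩
    have hspan := he.lie_add_mem_span_toEnd_pow (hK K le_rfl).2 (fun k hk ↦ (hK k hk).1) (t + n)
    rwa [pow_add, Module.End.mul_apply, hn, map_zero, Submodule.span_singleton_eq_bot.2 rfl,
      Submodule.mem_bot] at hspan

end Field

end IsPositiveWittFamily

end

theorem stmt5_general (L : Type*) [LieRing L] [LieAlgebra ℂ L] (e : ℤ → L) (c : L)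
    (he : ∀ i j : ℤ, ⁅e i, e j⁆ =
      ((j - i : ℤ) : ℂ) • e (i + j) + (if i = -j then ((i : ℂ)^3 - i) / 12 else 0) • c)
    (V : Type*) [AddCommGroup V] [Module ℂ V] [LieRingModule L V] [LieModule ℂ L V]
    (hV : ∃ v : V, v ≠ 0)
    (hnil : ∀ i : ℤ, 0 < i → ∀ u : V, ∃ m : ℕ, (fun u : V => ⁅e i, u⁆)^[m] u = 0) :
    ∃ v : V, v ≠ 0 ∧ ∀ i : ℤ, 0 < i → ⁅e i, v⁆ = 0 := by
  have hWitt : IsPositiveWittFamily ℂ e := fun i j hi hj ↦ by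
    rw [he, if_neg (by omega), zero_smul, add_zero]
  have hnil' (i : ℤ) (hi : 0 < i) (u : V) : ∃ m : ℕ, (toEnd ℂ L V (e i) ^ m) u = 0 :=
    (hnil i hi u).imp fun m hm ↦ (Module.End.pow_apply _ m u).trans hm
  obtain ⟨v, hv⟩ := hV
  obtain ⟨K, hK⟩ := eventually_atTop.1
    ((hWitt.eventually_lie_eq_zero (hnil' 1 one_pos) v).and (eventually_ge_atTop 1))
  exact hWitt.exists_ne_zero_forall_pos_lie_eq_zero hnil' (hK K le_rfl).2
    ⟨v, hv, fun j hj ↦ (hK j hj).1⟩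

/-- A nonzero Virasoro module on which every `e i`, `i > 0`, acts locally
nilpotently contains a nonzero vector annihilated by all `e i`, `i > 0`. -/
theorem stmt5 (L : Type*) [LieRing L] [LieAlgebra ℂ L] (e : ℤ → L) (c : L)
    (hc : ∀ x : L, ⁅c, x⁆ = 0)
    (he : ∀ i j : ℤ, ⁅e i, e j⁆ =
      ((j - i : ℤ) : ℂ) • e (i + j) + (if i = -j then ((i : ℂ)^3 - i) / 12 else 0) • c)
    (V : Type*) [AddCommGroup V] [Module ℂ V] [LieRingModule L V] [LieModule ℂ L V]
    (hV : ∃ v : V, v ≠ 0)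
    (hnil : ∀ i : ℤ, 0 < i → ∀ u : V, ∃ m : ℕ, (fun u : V => ⁅e i, u⁆)^[m] u = 0) :
    ∃ v : V, v ≠ 0 ∧ ∀ i : ℤ, 0 < i → ⁅e i, v⁆ = 0 :=
  stmt5_general L e c he V hV hnil
end

section
/- Let V be a nonzero module over the Heisenberg–Virasoro algebra on which every basis element of n₊ (i.e. each e_i and z_i with i > 0) acts locally nilpotently. Then there exists a nonzero v ∈ V with n₊·v = 0. -/
/-!
Local nilpotence of `e₁` gives a nonzero `u` with `e₁ u = 0`. On such a `u`, `ad e₁` raises degrees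
with nonzero coefficients (`[e₁, e_j] = (j - 1) e_{j+1}` for `j ≥ 2`, `[e₁, z_j] = j z_{j+1}` for
`j ≥ 1`), so `e_j u` and `z_j u` are nonzero multiples of iterates of `e₁` applied to `e₂ u` and
`z₁ u`; hence they vanish for large `j`.

Then descend: brackets inside `n₊` raise degrees, so the vectors killed by all `e_i`, `z_i` with
`i > n` form a space stable under `e_n`, and its subspace killed by `e_n` is stable under `z_n`.
Local nilpotence of `e_n`, then of `z_n`, yields a nonzero vector killed from degree `n` on; go
down to `n = 1`.
-/

open Filter

theorem Set.MapsTo.exists_mem_ne_zero_apply_eq_zero {V : Type*} [Zero V] {f : V → V}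
    {S : Set V} (hf : Set.MapsTo f S S) {w : V} (hw : w ≠ 0) (hwS : w ∈ S) {m : ℕ}
    (hm : f^[m] w = 0) : ∃ v ∈ S, v ≠ 0 ∧ f v = 0 := by
  induction m generalizing w with
  | zero => exact absurd hm hw
  | succ m ih =>
    by_cases hfw : f w = 0
    · exact ⟨w, hwS, hw, hfw⟩
    · exact ih hfw (hf hwS) hm

section LieModule

variable {L M : Type*} [LieRing L] [AddCommGroup M] [LieRingModule L M]

theorem lie_lie_eq_zero_of_lie_eq_zero {x y : L} {v : M} (hx : ⁅x, v⁆ = 0)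
    (hxy : ⁅⁅x, y⁆, v⁆ = 0) : ⁅x, ⁅y, v⁆⁆ = 0 := by
  rw [leibniz_lie, hxy, hx, lie_zero, add_zero]

theorem iterate_lie_lie_eq_prod_smul {K : Type*} [CommRing K] [LieAlgebra K L] [Module K M]
    [LieModule K L M] {a : L} {x : ℤ → L} {c : ℤ → K} {j₀ : ℤ}
    (hx : ∀ j ≥ j₀, ⁅a, x j⁆ = c j • x (j + 1)) {u : M} (hu : ⁅a, u⁆ = 0) (k : ℕ) :
    (fun w : M => ⁅a, w⁆)^[k] ⁅x j₀, u⁆ =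
      (∏ i ∈ Finset.range k, c (j₀ + i)) • ⁅x (j₀ + k), u⁆ := by
  induction k with
  | zero => simp
  | succ k ih =>
    rw [Function.iterate_succ_apply', ih, lie_smul, leibniz_lie, hu, lie_zero, add_zero,
      hx _ (by omega), smul_lie, smul_smul, Finset.prod_range_succ]
    push_cast
    rw [add_assoc]

theorem eventually_lie_eq_zero_of_iterate_eq_zero {K : Type*} [Field K] [LieAlgebra K L]
    [Module K M] [LieModule K L M] {a : L} {x : ℤ → L} {c : ℤ → K} {j₀ : ℤ}
    (hx : ∀ j ≥ j₀, ⁅a, x j⁆ = c j • x (j + 1)) (hc : ∀ j ≥ j₀, c j ≠ 0) {u : M}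
    (hu : ⁅a, u⁆ = 0) {m : ℕ} (hm : (fun w : M => ⁅a, w⁆)^[m] ⁅x j₀, u⁆ = 0) :
    ∀ᶠ j in atTop, ⁅x j, u⁆ = 0 := by
  filter_upwards [eventually_ge_atTop (j₀ + m)] with j hj
  obtain ⟨k, rfl⟩ : ∃ k : ℕ, j = j₀ + k := ⟨(j - j₀).toNat, by omega⟩
  have hkill : (fun w : M => ⁅a, w⁆)^[k] ⁅x j₀, u⁆ = 0 := by
    rw [← Nat.sub_add_cancel (show m ≤ k by omega), Function.iterate_add_apply, hm]
    exact Function.iterate_fixed (lie_zero a) _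
  rw [iterate_lie_lie_eq_prod_smul hx hu, smul_eq_zero, Finset.prod_eq_zero_iff] at hkill
  exact hkill.resolve_left fun ⟨i, _, hi⟩ => hc _ (by omega) hi

end LieModule

section HeisenbergVirasoro

variable {L V : Type*} [LieRing L] [AddCommGroup V] [LieRingModule L V] {e z : ℤ → L}

variable (V e z) in
def annihilatedFrom (m n : ℤ) : Set V :=
  {v | (∀ i ≥ m, ⁅e i, v⁆ = 0) ∧ ∀ i ≥ n, ⁅z i, v⁆ = 0}

variable {K : Type*} [Field K] [LieAlgebra K L] [Module K V] [LieModule K L V]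

theorem mapsTo_lie_e_annihilatedFrom
    (hee : ∀ i j : ℤ, 0 < i → 0 < j → ⁅e i, e j⁆ = ((j - i : ℤ) : K) • e (i + j))
    (hez : ∀ i j : ℤ, 0 < i → 0 < j → ⁅e i, z j⁆ = (j : K) • z (i + j)) {n : ℤ} (hn : 0 < n) :
    Set.MapsTo (fun v : V => ⁅e n, v⁆)
      (annihilatedFrom V e z (n + 1) (n + 1)) (annihilatedFrom V e z (n + 1) (n + 1)) := by
  rintro v ⟨hve, hvz⟩
  refine ⟨fun i hi => lie_lie_eq_zero_of_lie_eq_zero (hve i hi) ?_,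
    fun i hi => lie_lie_eq_zero_of_lie_eq_zero (hvz i hi) ?_⟩
  · rw [hee i n (by omega) hn, smul_lie, hve (i + n) (by omega), smul_zero]
  · rw [← lie_skew, hez n i hn (by omega), neg_lie, smul_lie, hvz (n + i) (by omega), smul_zero,
      neg_zero]

theorem mapsTo_lie_z_annihilatedFrom
    (hez : ∀ i j : ℤ, 0 < i → 0 < j → ⁅e i, z j⁆ = (j : K) • z (i + j))
    (hzz : ∀ i j : ℤ, 0 < i → 0 < j → ⁅z i, z j⁆ = 0) {n : ℤ} (hn : 0 < n) :
    Set.MapsTo (fun v : V => ⁅z n, v⁆)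
      (annihilatedFrom V e z n (n + 1)) (annihilatedFrom V e z n (n + 1)) := by
  rintro v ⟨hve, hvz⟩
  refine ⟨fun i hi => lie_lie_eq_zero_of_lie_eq_zero (hve i hi) ?_,
    fun i hi => lie_lie_eq_zero_of_lie_eq_zero (hvz i hi) ?_⟩
  · rw [hez i n (by omega) hn, smul_lie, hvz (i + n) (by omega), smul_zero]
  · rw [hzz i n (by omega) hn, zero_lie]

theorem exists_ne_zero_mem_annihilatedFrom_of_succ
    (hee : ∀ i j : ℤ, 0 < i → 0 < j → ⁅e i, e j⁆ = ((j - i : ℤ) : K) • e (i + j))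
    (hez : ∀ i j : ℤ, 0 < i → 0 < j → ⁅e i, z j⁆ = (j : K) • z (i + j))
    (hzz : ∀ i j : ℤ, 0 < i → 0 < j → ⁅z i, z j⁆ = 0) {n : ℤ} (hn : 0 < n)
    (hnile : ∀ u : V, ∃ m : ℕ, (fun u : V => ⁅e n, u⁆)^[m] u = 0)
    (hnilz : ∀ u : V, ∃ m : ℕ, (fun u : V => ⁅z n, u⁆)^[m] u = 0)
    {w : V} (hw : w ∈ annihilatedFrom V e z (n + 1) (n + 1)) (hw0 : w ≠ 0) :
    ∃ v ∈ annihilatedFrom V e z n n, v ≠ 0 := by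
  have extend {P : ℤ → Prop} (hP : ∀ i ≥ n + 1, P i) (h : P n) : ∀ i ≥ n, P i :=
    fun i hi => hi.eq_or_lt.elim (· ▸ h) fun hlt => hP i hlt
  obtain ⟨m, hm⟩ := hnile w
  obtain ⟨w₁, ⟨hw₁e, hw₁z⟩, hw₁0, hw₁⟩ :=
    (mapsTo_lie_e_annihilatedFrom hee hez hn).exists_mem_ne_zero_apply_eq_zero hw0 hw hm
  obtain ⟨m', hm'⟩ := hnilz w₁
  obtain ⟨v, ⟨hve, hvz⟩, hv0, hv⟩ :=
    (mapsTo_lie_z_annihilatedFrom hez hzz hn).exists_mem_ne_zero_apply_eq_zero hw₁0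
      ⟨extend hw₁e hw₁, hw₁z⟩ hm'
  exact ⟨v, ⟨hve, extend hvz hv⟩, hv0⟩

theorem exists_ne_zero_mem_annihilatedFrom_one
    (hee : ∀ i j : ℤ, 0 < i → 0 < j → ⁅e i, e j⁆ = ((j - i : ℤ) : K) • e (i + j))
    (hez : ∀ i j : ℤ, 0 < i → 0 < j → ⁅e i, z j⁆ = (j : K) • z (i + j))
    (hzz : ∀ i j : ℤ, 0 < i → 0 < j → ⁅z i, z j⁆ = 0)
    (hnile : ∀ i : ℤ, 0 < i → ∀ u : V, ∃ m : ℕ, (fun u : V => ⁅e i, u⁆)^[m] u = 0)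
    (hnilz : ∀ i : ℤ, 0 < i → ∀ u : V, ∃ m : ℕ, (fun u : V => ⁅z i, u⁆)^[m] u = 0)
    {N : ℤ} (hN : 1 ≤ N) {w : V} (hw : w ∈ annihilatedFrom V e z N N) (hw0 : w ≠ 0) :
    ∃ v ∈ annihilatedFrom V e z 1 1, v ≠ 0 := by
  induction N, hN using Int.leInduction generalizing w with
  | base => exact ⟨w, hw, hw0⟩
  | succ n hn ih =>
    obtain ⟨v, hv, hv0⟩ := exists_ne_zero_mem_annihilatedFrom_of_succ hee hez hzz
      (by omega) (hnile n (by omega)) (hnilz n (by omega)) hw hw0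
    exact ih hv hv0

theorem exists_ne_zero_mem_annihilatedFrom [CharZero K]
    (hee : ∀ i j : ℤ, 0 < i → 0 < j → ⁅e i, e j⁆ = ((j - i : ℤ) : K) • e (i + j))
    (hez : ∀ i j : ℤ, 0 < i → 0 < j → ⁅e i, z j⁆ = (j : K) • z (i + j))
    (hV : ∃ v : V, v ≠ 0) (hnil : ∀ u : V, ∃ m : ℕ, (fun u : V => ⁅e 1, u⁆)^[m] u = 0) :
    ∃ N ≥ 1, ∃ v ∈ annihilatedFrom V e z N N, v ≠ 0 := by
  obtain ⟨v₀, hv₀⟩ := hV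
  obtain ⟨m₀, hm₀⟩ := hnil v₀
  obtain ⟨u, -, hu0, hu⟩ :=
    (Set.mapsTo_univ _ _).exists_mem_ne_zero_apply_eq_zero hv₀ (Set.mem_univ _) hm₀
  obtain ⟨me, hme⟩ := hnil ⁅e 2, u⁆
  obtain ⟨mz, hmz⟩ := hnil ⁅z 1, u⁆
  have he : ∀ᶠ j in atTop, ⁅e j, u⁆ = 0 :=
    eventually_lie_eq_zero_of_iterate_eq_zero (j₀ := 2) (c := fun j => ((j - 1 : ℤ) : K))
      (fun j hj => by rw [hee 1 j one_pos (by omega), add_comm 1 j])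
      (fun j hj => Int.cast_ne_zero.2 (by omega)) hu hme
  have hz : ∀ᶠ j in atTop, ⁅z j, u⁆ = 0 :=
    eventually_lie_eq_zero_of_iterate_eq_zero (j₀ := 1) (c := fun j => (j : K))
      (fun j hj => by rw [hez 1 j one_pos (by omega), add_comm 1 j])
      (fun j hj => Int.cast_ne_zero.2 (by omega)) hu hmz
  obtain ⟨N, hN⟩ := eventually_atTop.1 (he.and (hz.and (eventually_ge_atTop 1)))
  exact ⟨N, (hN N le_rfl).2.2, u, ⟨fun i hi => (hN i hi).1, fun i hi => (hN i hi).2.1⟩, hu0⟩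

end HeisenbergVirasoro

theorem stmt7_general (L : Type*) [LieRing L] [LieAlgebra ℂ L]
    (e z : ℤ → L) (c₁ c₂ c₃ : L)
    (hee : ∀ i j : ℤ, ⁅e i, e j⁆ =
      ((j - i : ℤ) : ℂ) • e (i + j) + (if i = -j then ((j : ℂ)^3 - j) / 12 else 0) • c₁)
    (hez : ∀ i j : ℤ, ⁅e i, z j⁆ =
      (j : ℂ) • z (i + j) - (if i = -j then Complex.I * (j : ℂ)^2 else 0) • c₂)
    (hzz : ∀ i j : ℤ, ⁅z i, z j⁆ = (if i = -j then (j : ℂ) else 0) • c₃)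
    (V : Type*) [AddCommGroup V] [Module ℂ V] [LieRingModule L V] [LieModule ℂ L V]
    (hV : ∃ v : V, v ≠ 0)
    (hnile : ∀ i : ℤ, 0 < i → ∀ u : V, ∃ m : ℕ, (fun u : V => ⁅e i, u⁆)^[m] u = 0)
    (hnilz : ∀ i : ℤ, 0 < i → ∀ u : V, ∃ m : ℕ, (fun u : V => ⁅z i, u⁆)^[m] u = 0) :
    ∃ v : V, v ≠ 0 ∧ ∀ i : ℤ, 0 < i → ⁅e i, v⁆ = 0 ∧ ⁅z i, v⁆ = 0 := by
  have heePos : ∀ i j : ℤ, 0 < i → 0 < j → ⁅e i, e j⁆ = ((j - i : ℤ) : ℂ) • e (i + j) :=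
    fun i j hi hj => by rw [hee, if_neg (by omega), zero_smul, add_zero]
  have hezPos : ∀ i j : ℤ, 0 < i → 0 < j → ⁅e i, z j⁆ = (j : ℂ) • z (i + j) :=
    fun i j hi hj => by rw [hez, if_neg (by omega), zero_smul, sub_zero]
  have hzzPos : ∀ i j : ℤ, 0 < i → 0 < j → ⁅z i, z j⁆ = 0 :=
    fun i j hi hj => by rw [hzz, if_neg (by omega), zero_smul]
  obtain ⟨N, hN, w, hw, hw0⟩ :=
    exists_ne_zero_mem_annihilatedFrom heePos hezPos hV (hnile 1 one_pos)
  obtain ⟨v, ⟨hve, hvz⟩, hv0⟩ :=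
    exists_ne_zero_mem_annihilatedFrom_one heePos hezPos hzzPos hnile hnilz hN hw hw0
  exact ⟨v, hv0, fun i hi => ⟨hve i hi, hvz i hi⟩⟩

/-- A nonzero module over the Heisenberg–Virasoro algebra on which every
`e i` and `z i` with `i > 0` acts locally nilpotently contains a nonzero vector
annihilated by the whole positive part `n₊`. -/
theorem stmt7 (L : Type*) [LieRing L] [LieAlgebra ℂ L]
    (e z : ℤ → L) (c₁ c₂ c₃ : L)
    (hc₁ : ∀ x : L, ⁅c₁, x⁆ = 0) (hc₂ : ∀ x : L, ⁅c₂, x⁆ = 0) (hc₃ : ∀ x : L, ⁅c₃, x⁆ = 0)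
    (hee : ∀ i j : ℤ, ⁅e i, e j⁆ =
      ((j - i : ℤ) : ℂ) • e (i + j) + (if i = -j then ((j : ℂ)^3 - j) / 12 else 0) • c₁)
    (hez : ∀ i j : ℤ, ⁅e i, z j⁆ =
      (j : ℂ) • z (i + j) - (if i = -j then Complex.I * (j : ℂ)^2 else 0) • c₂)
    (hzz : ∀ i j : ℤ, ⁅z i, z j⁆ = (if i = -j then (j : ℂ) else 0) • c₃)
    (V : Type*) [AddCommGroup V] [Module ℂ V] [LieRingModule L V] [LieModule ℂ L V]
    (hV : ∃ v : V, v ≠ 0)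
    (hnile : ∀ i : ℤ, 0 < i → ∀ u : V, ∃ m : ℕ, (fun u : V => ⁅e i, u⁆)^[m] u = 0)
    (hnilz : ∀ i : ℤ, 0 < i → ∀ u : V, ∃ m : ℕ, (fun u : V => ⁅z i, u⁆)^[m] u = 0) :
    ∃ v : V, v ≠ 0 ∧ ∀ i : ℤ, 0 < i → ⁅e i, v⁆ = 0 ∧ ⁅z i, v⁆ = 0 :=
  stmt7_general L e z c₁ c₂ c₃ hee hez hzz V hV hnile hnilz
end

section
/- Every endomorphism of a simple module over a countably generated associative ℂ-algebra is multiplication by a scalar. -/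
/-!
By Schur's lemma `End_A(M)` is a division ring; evaluation at a nonzero vector embeds it in `M`,
which is a quotient of `A`, so its dimension over `ℂ` is countable. A division algebra of dimension
smaller than `#ℂ` is algebraic: for a transcendental `x` the resolvents `(x - a)⁻¹`, `a ∈ ℂ`,
are linearly independent. As `ℂ` is algebraically closed, the endomorphism ring is then `ℂ`.
-/

open Cardinal

universe u v

namespace Subfield

variable {D : Type*} [DivisionRing D]

def centralizer (s : Set D) : Subfield D where
  toSubring := Subring.centralizer s
  inv_mem' _ := Set.inv_mem_centralizer₀

abbrev fieldOfComm (K : Subfield D) (hcomm : ∀ a ∈ K, ∀ b ∈ K, a * b = b * a) : Field K where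
  mul_comm a b := Subtype.ext (hcomm a a.2 b b.2)

end Subfield

theorem Transcendental.linearIndependent_sub_inv_of_divisionRing {F D : Type*} [Field F]
    [DivisionRing D] [Algebra F D] {x : D} (hx : Transcendental F x) :
    LinearIndependent F fun a ↦ (x - algebraMap F D a)⁻¹ := by
  -- a commutative division subring containing `x` and the image of `F`
  let K := Subfield.centralizer (Set.centralizer {x})
  let _ : Field K := K.fieldOfComm
    (Set.centralizer_centralizer_comm_of_comm (by simp))
  have hF : ∀ a : F, algebraMap F D a ∈ K := fun a b _ ↦ (Algebra.commutes a b).symm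
  let _ : Algebra F K := ((algebraMap F D).codRestrict K.toSubring hF).toAlgebra
  let ι : K →ₐ[F] D := { K.subtype with commutes' := fun _ ↦ rfl }
  have hxK : x ∈ K := Set.subset_centralizer_centralizer rfl
  have hx' : Transcendental F (⟨x, hxK⟩ : K) := fun h ↦ hx (h.algHom ι)
  exact hx'.linearIndependent_sub_inv.map' ι.toLinearMap
    (LinearMap.ker_eq_bot.2 Subtype.val_injective)

theorem Algebra.IsAlgebraic.of_lift_rank_lt_lift_mk {F : Type u} {D : Type v} [Field F]
    [DivisionRing D] [Algebra F D] (h : lift.{u} (Module.rank F D) < lift.{v} #F) :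
    Algebra.IsAlgebraic F D where
  isAlgebraic x := by
    by_contra hx
    exact h.not_ge
      (Transcendental.linearIndependent_sub_inv_of_divisionRing hx).cardinal_lift_le_rank

theorem Algebra.rank_le_aleph0_of_adjoin_eq_top {R A : Type*} [CommRing R] [Ring A] [Algebra R A]
    {s : Set A} (hs : s.Countable) (hadj : Algebra.adjoin R s = ⊤) : Module.rank R A ≤ ℵ₀ :=
  calc Module.rank R A = Module.rank R (Algebra.adjoin R s) := by
        rw [hadj]; exact Subalgebra.topEquiv.toLinearEquiv.rank_eq.symm
    _ ≤ max #s ℵ₀ := Algebra.rank_adjoin_le s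
    _ = ℵ₀ := max_eq_right (mk_le_aleph0_iff.2 hs.to_subtype)

section SimpleModule

variable {R : Type*} {A : Type u} {M : Type v} [CommRing R] [Ring A] [Algebra R A]
  [AddCommGroup M] [Module A M] [Module R M] [IsScalarTower R A M] [IsSimpleModule A M]

theorem IsSimpleModule.lift_rank_le : lift.{u} (Module.rank R M) ≤ lift.{v} (Module.rank R A) := by
  have := IsSimpleModule.nontrivial A M
  obtain ⟨m, hm⟩ := exists_ne (0 : M)
  exact ((LinearMap.toSpanSingleton A M m).restrictScalars R).lift_rank_le_of_surjective
    (IsSimpleModule.toSpanSingleton_surjective A hm)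

theorem IsSimpleModule.rank_end_le : Module.rank R (Module.End A M) ≤ Module.rank R M := by
  have := IsSimpleModule.nontrivial A M
  obtain ⟨m, hm⟩ := exists_ne (0 : M)
  let eval : Module.End A M →ₗ[R] M :=
    (LinearMap.applyₗ m).comp (LinearMap.restrictScalarsₗ R A M M R)
  refine eval.rank_le_of_injective ((injective_iff_map_eq_zero eval).2 fun f hf ↦ ?_)
  exact f.injective_or_eq_zero.resolve_left fun hinj ↦ hm (hinj (hf.trans f.map_zero.symm))

end SimpleModule

/-- Every endomorphism of a simple module over a countably generated
associative `ℂ`-algebra is multiplication by a scalar. -/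
theorem stmt9 (A : Type*) [Ring A] [Algebra ℂ A]
    (hA : ∃ S : Set A, S.Countable ∧ Algebra.adjoin ℂ S = ⊤)
    (M : Type*) [AddCommGroup M] [Module A M] [IsSimpleModule A M]
    (f : M →ₗ[A] M) :
    ∃ c : ℂ, ∀ m : M, f m = algebraMap ℂ A c • m := by
  classical
  obtain ⟨S, hS, hadj⟩ := hA
  let _ : Module ℂ M := Module.compHom M (algebraMap ℂ A)
  have _ : IsScalarTower ℂ A M := IsScalarTower.of_compHom ℂ A M
  have hrank : Module.rank ℂ (Module.End A M) ≤ ℵ₀ :=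
    IsSimpleModule.rank_end_le.trans <| lift_le_aleph0.1 <|
      IsSimpleModule.lift_rank_le.trans <| lift_le_aleph0.2 <|
        Algebra.rank_le_aleph0_of_adjoin_eq_top hS hadj
  have _ : Algebra.IsAlgebraic ℂ (Module.End A M) :=
    .of_lift_rank_lt_lift_mk <| (lift_le_aleph0.2 hrank).trans_lt <| by
      rw [mk_complex, lift_continuum]; exact aleph0_lt_continuum
  obtain ⟨c, hc⟩ := (IsAlgClosed.algebraMap_bijective_of_isIntegral (k := ℂ)).2 f
  exact ⟨c, fun m ↦ by rw [← hc, Module.algebraMap_end_apply, algebraMap_smul]⟩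
end

section
/- Define the Heisenberg Lie algebra 𝔥 with basis {z_i : i ∈ ℤ} and bracket [z_i,z_j] = j·δ_{i,−j}·z_0. Let I = {ε : ℕ → ℕ≥1 : ε_i = 2 for all sufficiently large i} and let V be the ℂ-vector space with basis {v_ε : ε ∈ I}. The formulas z_0·v_ε = v_ε; for i > 0: z_i·v_ε = 0 if ε_i = 1 and z_i·v_ε = v_{ε − δ_i} if ε_i > 1 (subtract 1 in position i); for i < 0: z_i·v_ε = i·ε_{−i}·v_{ε + δ_{−i}} (add 1 in position −i), define a representation of 𝔥 on V. -/
/-- The index set `I`: sequences of positive integers that are eventually `2`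
(positions `1, 2, …` are the relevant ones; we index by `ℕ`). -/
def HIdx : Type := {ε : ℕ → ℕ // (∀ n, 1 ≤ ε n) ∧ ∃ N, ∀ n ≥ N, ε n = 2}

/-- The underlying space `V` with basis `{v_ε : ε ∈ I}`. -/
abbrev HV : Type := HIdx →₀ ℂ

/-- Change the value of `ε` at position `k` to `m ≥ 1`. -/
def HIdx.upd (ε : HIdx) (k : ℕ) (m : ℕ) (hm : 1 ≤ m) : HIdx :=
  ⟨Function.update ε.1 k m, by
    constructor
    · intro n
      rcases eq_or_ne n k with rfl | h
      · simpa [Function.update] using hm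
      · simpa [Function.update, h] using ε.2.1 n
    · obtain ⟨N, hN⟩ := ε.2.2
      exact ⟨max N (k + 1), fun n hn => by
        have h1 : N ≤ n := le_trans (le_max_left _ _) hn
        have h2 : n ≠ k := by
          have := le_trans (le_max_right _ _) hn; omega
        simpa [Function.update, h2] using hN n h1⟩⟩

/-- The image of the basis vector `v_ε` under `z_i`:
`z_0·v_ε = v_ε`; for `i > 0`, `z_i·v_ε = 0` if `ε_i = 1` and `v_{ε-δ_i}` if `ε_i > 1`;
for `i < 0`, `z_i·v_ε = i·ε_{-i}·v_{ε+δ_{-i}}`. -/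
noncomputable def htarget (i : ℤ) (ε : HIdx) : HV :=
  if i = 0 then Finsupp.single ε 1
  else if 0 < i then
    (if h : 2 ≤ ε.1 i.toNat then
      Finsupp.single (ε.upd i.toNat (ε.1 i.toNat - 1) (by omega)) 1
    else 0)
  else ((i : ℂ) * (ε.1 (-i).toNat : ℂ)) •
    Finsupp.single (ε.upd (-i).toNat (ε.1 (-i).toNat + 1) (by omega)) 1

/-- The linear action of `z_i` on `V`, extended from the basis by linearity. -/
noncomputable def hAct (i : ℤ) : HV →ₗ[ℂ] HV :=
  Finsupp.lsum ℂ fun ε => LinearMap.toSpanSingleton ℂ HV (htarget i ε)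

/-! Each `z_i` with `i ≠ 0` acts on the single position `|i|` of the index: it lowers that entry
for `i > 0` and raises it with weight `i·ε_{|i|}` for `i < 0`. Operators at different positions
commute. At one position, lowering after raising multiplies `v_ε` by `ε_k`, and raising after
lowering multiplies it by `ε_k - 1` (also when `ε_k = 1`, where lowering kills `v_ε`). So the two
differ by the identity, which gives `[z_k, z_{-k}] = -k·z_0`. -/

namespace HIdx

lemma ext' {a b : HIdx} (h : ∀ n, a.1 n = b.1 n) : a = b := Subtype.ext (funext h)

@[simp] lemma upd_apply (ε : HIdx) (k m : ℕ) (hm : 1 ≤ m) (n : ℕ) :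
    (ε.upd k m hm).1 n = if n = k then m else ε.1 n := by
  simp [upd, Function.update]

lemma upd_upd_of_ne (ε : HIdx) {k l : ℕ} (h : k ≠ l) (m m' : ℕ) (hm : 1 ≤ m) (hm' : 1 ≤ m') :
    (ε.upd k m hm).upd l m' hm' = (ε.upd l m' hm').upd k m hm :=
  ext' fun n => by simp only [upd_apply]; split_ifs <;> first | rfl | omega

lemma upd_upd (ε : HIdx) (k m m' : ℕ) (hm : 1 ≤ m) (hm' : 1 ≤ m') :
    (ε.upd k m hm).upd k m' hm' = ε.upd k m' hm' :=
  ext' fun n => by simp only [upd_apply]; split_ifs <;> rfl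

lemma upd_self (ε : HIdx) (k : ℕ) (h : 1 ≤ ε.1 k) : ε.upd k (ε.1 k) h = ε :=
  ext' fun n => by simp only [upd_apply]; split_ifs with hn <;> simp [hn]

end HIdx

noncomputable def siteOp (k : ℕ) (f : ℕ → ℕ) (hf : ∀ m, 1 ≤ f m) (c : ℕ → ℂ) : HV →ₗ[ℂ] HV :=
  Finsupp.lsum ℂ fun ε => c (ε.1 k) • Finsupp.lsingle (ε.upd k (f (ε.1 k)) (hf _))

@[simp] lemma siteOp_single (k : ℕ) (f : ℕ → ℕ) (hf : ∀ m, 1 ≤ f m) (c : ℕ → ℂ) (ε : HIdx)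
    (a : ℂ) : siteOp k f hf c (Finsupp.single ε a) =
      Finsupp.single (ε.upd k (f (ε.1 k)) (hf _)) (c (ε.1 k) * a) := by
  simp [siteOp, Finsupp.smul_single]

lemma siteOp_comm {k l : ℕ} (hkl : k ≠ l) (f g : ℕ → ℕ) (hf : ∀ m, 1 ≤ f m)
    (hg : ∀ m, 1 ≤ g m) (c d : ℕ → ℂ) :
    siteOp k f hf c ∘ₗ siteOp l g hg d = siteOp l g hg d ∘ₗ siteOp k f hf c := by
  refine Finsupp.lhom_ext fun ε a => ?_
  simp only [LinearMap.comp_apply, siteOp_single, HIdx.upd_apply, if_neg hkl, if_neg hkl.symm,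
    HIdx.upd_upd_of_ne ε hkl, mul_left_comm]

-- The `max` only keeps the index valid: the coefficient already vanishes when `ε k = 1`.
noncomputable def lowerOp (k : ℕ) : HV →ₗ[ℂ] HV :=
  siteOp k (fun m => max (m - 1) 1) (fun _ => le_max_right _ _) (fun m => if 2 ≤ m then 1 else 0)

noncomputable def raiseOp (k : ℕ) : HV →ₗ[ℂ] HV :=
  siteOp k (· + 1) (fun _ => Nat.le_add_left 1 _) (fun m => m)

lemma lowerOp_comp_raiseOp (k : ℕ) :
    lowerOp k ∘ₗ raiseOp k = raiseOp k ∘ₗ lowerOp k + LinearMap.id := by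
  refine Finsupp.lhom_ext fun ε a => ?_
  have hε := ε.2.1 k
  have lower_raise : lowerOp k (raiseOp k (Finsupp.single ε a)) =
      Finsupp.single ε (ε.1 k * a) := by
    simp only [lowerOp, raiseOp, siteOp_single, HIdx.upd_apply, ite_true, HIdx.upd_upd,
      Nat.add_sub_cancel, max_eq_left hε, HIdx.upd_self, if_pos (by omega : 2 ≤ ε.1 k + 1),
      one_mul]
  have raise_lower : raiseOp k (lowerOp k (Finsupp.single ε a)) =
      Finsupp.single ε ((ε.1 k - 1 : ℂ) * a) := by
    simp only [lowerOp, raiseOp, siteOp_single, HIdx.upd_apply, ite_true, HIdx.upd_upd]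
    by_cases h : 2 ≤ ε.1 k
    · have hmax : max (ε.1 k - 1) 1 = ε.1 k - 1 := max_eq_left (by omega)
      simp only [hmax, Nat.sub_add_cancel hε, HIdx.upd_self, if_pos h, one_mul, Nat.cast_sub hε,
        Nat.cast_one]
    · simp [show ε.1 k = 1 by omega]
  rw [LinearMap.add_apply, LinearMap.comp_apply, LinearMap.comp_apply, lower_raise, raise_lower,
    LinearMap.id_apply, ← Finsupp.single_add]
  congr 1
  ring

lemma lowerOp_raiseOp_sub (k : ℕ) (v : HV) :
    lowerOp k (raiseOp k v) - raiseOp k (lowerOp k v) = v :=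
  sub_eq_of_eq_add' (LinearMap.congr_fun (lowerOp_comp_raiseOp k) v)

lemma hAct_single (i : ℤ) (ε : HIdx) (a : ℂ) :
    hAct i (Finsupp.single ε a) = a • htarget i ε := by
  simp [hAct]

lemma hAct_zero : hAct 0 = LinearMap.id :=
  Finsupp.lhom_ext fun ε a => by simp [hAct_single, htarget, Finsupp.smul_single]

lemma hAct_of_pos {i : ℤ} (hi : 0 < i) : hAct i = lowerOp i.natAbs := by
  refine Finsupp.lhom_ext fun ε a => ?_
  obtain ⟨k, rfl⟩ := Int.eq_ofNat_of_zero_le hi.le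
  simp only [hAct_single, htarget, if_neg hi.ne', if_pos hi, Int.toNat_natCast,
    Int.natAbs_natCast, lowerOp, siteOp_single]
  split_ifs with h
  · simp [max_eq_left (show 1 ≤ ε.1 k - 1 by omega)]
  · simp

lemma hAct_of_neg {i : ℤ} (hi : i < 0) : hAct i = (i : ℂ) • raiseOp i.natAbs := by
  refine Finsupp.lhom_ext fun ε a => ?_
  obtain ⟨k, rfl⟩ := Int.exists_eq_neg_ofNat hi.le
  simp only [hAct_single, htarget, if_neg hi.ne, if_neg hi.not_gt, neg_neg, Int.toNat_natCast,
    Int.natAbs_neg, Int.natAbs_natCast, LinearMap.smul_apply, raiseOp, siteOp_single,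
    Finsupp.smul_single, smul_eq_mul, mul_one]
  congr 1
  ring

lemma hAct_eq_smul_siteOp {i : ℤ} (hi : i ≠ 0) :
    ∃ (a : ℂ) (f : ℕ → ℕ) (hf : ∀ m, 1 ≤ f m) (c : ℕ → ℂ), hAct i = a • siteOp i.natAbs f hf c := by
  rcases hi.lt_or_gt with hi | hi
  · exact ⟨i, _, _, _, hAct_of_neg hi⟩
  · exact ⟨1, _, _, _, (hAct_of_pos hi).trans (one_smul ℂ _).symm⟩

lemma hAct_comp_comm_of_natAbs_ne {i j : ℤ} (h : i.natAbs ≠ j.natAbs) :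
    hAct i ∘ₗ hAct j = hAct j ∘ₗ hAct i := by
  rcases eq_or_ne i 0 with rfl | hi
  · simp [hAct_zero]
  rcases eq_or_ne j 0 with rfl | hj
  · simp [hAct_zero]
  obtain ⟨a, f, hf, c, hfc⟩ := hAct_eq_smul_siteOp hi
  obtain ⟨b, g, hg, d, hgd⟩ := hAct_eq_smul_siteOp hj
  rw [hfc, hgd, LinearMap.smul_comp, LinearMap.comp_smul, LinearMap.smul_comp,
    LinearMap.comp_smul, siteOp_comm h, smul_comm]

/-- the formulas define a representation of the Heisenberg Lie
algebra (basis `{z_i}`, `[z_i,z_j] = j·δ_{i,-j}·z_0`) on `V`: the operators `hAct i`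
satisfy the defining bracket relations. -/
theorem stmt13 (i j : ℤ) (v : HV) :
    hAct i (hAct j v) - hAct j (hAct i v) =
      (if i = -j then (j : ℂ) else 0) • hAct 0 v := by
  rw [hAct_zero, LinearMap.id_apply]
  by_cases hij : i = -j
  · subst hij
    rw [if_pos rfl]
    rcases lt_trichotomy j 0 with hj | rfl | hj
    · simp only [hAct_of_pos (neg_pos.mpr hj), hAct_of_neg hj, Int.natAbs_neg,
        LinearMap.smul_apply, map_smul, ← smul_sub, lowerOp_raiseOp_sub]
    · simp [hAct_zero]
    · simp only [hAct_of_neg (neg_neg_of_pos hj), hAct_of_pos hj, Int.natAbs_neg,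
        LinearMap.smul_apply, map_smul, ← smul_sub]
      rw [← neg_sub, lowerOp_raiseOp_sub, Int.cast_neg, neg_smul, smul_neg, neg_neg]
  · rw [if_neg hij, zero_smul, sub_eq_zero]
    rcases eq_or_ne i j with rfl | hne
    · rfl
    · have hdist : i.natAbs ≠ j.natAbs := by omega
      simpa only [LinearMap.comp_apply] using
        LinearMap.congr_fun (hAct_comp_comm_of_natAbs_ne hdist) v
end

section
/- On the Heisenberg module V above, every nonzero vector u generates an infinite-dimensional n₊-submodule, where n₊ = span{z_i : i > 0}. In particular there is no nonzero v ∈ V with n₊·v = 0. -/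
/-!
For `m > 0` the operator `z_m` sends `v_ε` with `ε_m = 2` to `v_{ε'}`, where `ε'` is `ε` with its
`m`-th entry lowered to `1`. A nonzero `u` has finite support, so all of its indices are `2`
beyond some `N`; for `m > N` the operator `z_m` then acts on `u` by an injective relabelling of
the support, hence `z_m u ≠ 0`. Distinct `m, m' > N` give disjointly supported vectors (read
off position `m`), so the `z_m u` with `m > N` are linearly independent, and any `n₊`-stable
subspace containing `u` is infinite-dimensional. A nonzero vector killed by `n₊` would span a
one-dimensional such subspace.
-/

theorem Finsupp.linearIndependent_of_pairwise_disjoint_support {ι α R : Type*} [Ring R]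
    [NoZeroDivisors R] {f : ι → α →₀ R} (hf : ∀ i, f i ≠ 0)
    (hd : Pairwise fun i j => Disjoint (f i).support (f j).support) : LinearIndependent R f := by
  classical
  rw [linearIndependent_iff']
  intro s g hsum i hi
  obtain ⟨a, ha⟩ := Finsupp.support_nonempty_iff.2 (hf i)
  have hval : ∑ j ∈ s, g j * f j a = 0 := by
    simpa using DFunLike.congr_fun hsum a
  have hother : ∀ j ∈ s, j ≠ i → g j * f j a = 0 := fun j _ hji => by
    rw [Finsupp.notMem_support_iff.1 (Finset.disjoint_right.1 (hd hji) ha), mul_zero]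
  rw [Finset.sum_eq_single_of_mem i hi hother] at hval
  exact (mul_eq_zero.1 hval).resolve_right (Finsupp.mem_support_iff.1 ha)

namespace HIdx

def lower (ε : HIdx) (m : ℕ) : HIdx := ε.upd m 1 le_rfl

lemma lower_apply (ε : HIdx) (m n : ℕ) : (ε.lower m).1 n = if n = m then 1 else ε.1 n := by
  simp [lower, upd, Function.update_apply]

lemma lower_injOn (m : ℕ) : Set.InjOn (lower · m) {ε | ε.1 m = 2} := by
  intro ε hε ε' hε' heq
  refine Subtype.ext (funext fun n => ?_)
  have hn := congrArg (·.1 n) heq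
  simp only [lower_apply] at hn
  rcases eq_or_ne n m with rfl | hne
  · exact hε.trans hε'.symm
  · simpa [hne] using hn

lemma exists_forall_mem_eq_two (s : Finset HIdx) : ∃ N, ∀ ε ∈ s, ∀ n, N < n → ε.1 n = 2 := by
  choose F hF using fun ε : HIdx => ε.2.2
  exact ⟨s.sup F, fun ε hε n hn => hF ε n ((Finset.le_sup hε).trans hn.le)⟩

end HIdx

section LoweringOperators

variable {m : ℕ} {u : HV}

lemma htarget_natCast_of_eq_two (hm : 0 < m) {ε : HIdx} (h : ε.1 m = 2) :
    htarget m ε = Finsupp.single (ε.lower m) 1 := by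
  have hε : 2 ≤ ε.1 (m : ℤ).toNat := by rw [Int.toNat_natCast, h]
  rw [htarget, if_neg (by omega), if_pos (by omega), dif_pos hε]
  congr 1
  apply Subtype.ext
  simp only [HIdx.upd, HIdx.lower, Int.toNat_natCast, h]

lemma hAct_natCast_eq_mapDomain (hm : 0 < m) (h : ∀ ε ∈ u.support, ε.1 m = 2) :
    hAct m u = u.mapDomain (·.lower m) := by
  rw [hAct, Finsupp.mapDomain, Finsupp.lsum_apply]
  refine Finsupp.sum_congr fun ε hε => ?_
  rw [LinearMap.toSpanSingleton_apply, htarget_natCast_of_eq_two hm (h ε hε),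
    Finsupp.smul_single, smul_eq_mul, mul_one]

lemma coe_support_hAct_natCast (hm : 0 < m) (h : ∀ ε ∈ u.support, ε.1 m = 2) :
    ((hAct m u).support : Set HIdx) = (fun ε : HIdx => ε.lower m) '' u.support := by
  classical
  rw [hAct_natCast_eq_mapDomain hm h,
    Finsupp.mapDomain_support_of_injOn u ((HIdx.lower_injOn m).mono h), Finset.coe_image]

lemma hAct_natCast_ne_zero (hm : 0 < m) (h : ∀ ε ∈ u.support, ε.1 m = 2) (hu : u ≠ 0) :
    hAct m u ≠ 0 := by
  rw [← Finsupp.support_nonempty_iff, ← Finset.coe_nonempty, coe_support_hAct_natCast hm h,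
    Set.image_nonempty, Finset.coe_nonempty, Finsupp.support_nonempty_iff]
  exact hu

lemma disjoint_support_hAct_natCast {m' : ℕ} (hm : 0 < m) (hm' : 0 < m') (hne : m ≠ m')
    (h : ∀ ε ∈ u.support, ε.1 m = 2 ∧ ε.1 m' = 2) :
    Disjoint (hAct m u).support (hAct m' u).support := by
  rw [← Finset.disjoint_coe, coe_support_hAct_natCast hm fun ε hε => (h ε hε).1,
    coe_support_hAct_natCast hm' fun ε hε => (h ε hε).2, Set.disjoint_left]
  rintro _ ⟨ε, -, rfl⟩ ⟨ε', hε', heq⟩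
  have := congrArg (·.1 m) heq
  simp [HIdx.lower_apply, hne, (h ε' hε').1] at this

lemma exists_linearIndependent_hAct (hu : u ≠ 0) :
    ∃ N : ℕ, LinearIndependent ℂ fun k : ℕ => hAct ((N + k + 1 : ℕ) : ℤ) u := by
  obtain ⟨N, hN⟩ := HIdx.exists_forall_mem_eq_two u.support
  have h2 (k : ℕ) : ∀ ε ∈ u.support, ε.1 (N + k + 1) = 2 := fun ε hε => hN ε hε _ (by omega)
  refine ⟨N, Finsupp.linearIndependent_of_pairwise_disjoint_support
    (fun k => hAct_natCast_ne_zero (Nat.succ_pos _) (h2 k) hu) fun k l hkl => ?_⟩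
  exact disjoint_support_hAct_natCast (Nat.succ_pos _) (Nat.succ_pos _) (by omega)
    fun ε hε => ⟨h2 k ε hε, h2 l ε hε⟩

end LoweringOperators

/-- every nonzero `u ∈ V` generates an infinite-dimensional
`n₊`-submodule (any subspace containing `u` and stable under all `hAct i`, `i > 0`, is
infinite-dimensional); in particular no nonzero vector is annihilated by all of `n₊`. -/
theorem stmt16 :
    (∀ u : HV, u ≠ 0 → ∀ W : Submodule ℂ HV, u ∈ W →
      (∀ i : ℤ, 0 < i → ∀ w ∈ W, hAct i w ∈ W) → ¬ Module.Finite ℂ W) ∧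
    ¬ ∃ v : HV, v ≠ 0 ∧ ∀ i : ℤ, 0 < i → hAct i v = 0 := by
  have not_finite : ∀ u : HV, u ≠ 0 → ∀ W : Submodule ℂ HV, u ∈ W →
      (∀ i : ℤ, 0 < i → ∀ w ∈ W, hAct i w ∈ W) → ¬ Module.Finite ℂ W := by
    intro u hu W huW hW hfin
    obtain ⟨N, hli⟩ := exists_linearIndependent_hAct hu
    have hmem (k : ℕ) : hAct ((N + k + 1 : ℕ) : ℤ) u ∈ W := hW _ (by positivity) u huW
    have hliW : LinearIndependent ℂ fun k => (⟨_, hmem k⟩ : W) := .of_comp W.subtype hli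
    exact Module.Finite.not_linearIndependent_of_infinite _ hliW
  refine ⟨not_finite, ?_⟩
  rintro ⟨v, hv, hann⟩
  refine not_finite v hv (ℂ ∙ v) (Submodule.mem_span_singleton_self v) ?_ inferInstance
  intro i hi w hw
  obtain ⟨c, rfl⟩ := Submodule.mem_span_singleton.1 hw
  simp [hann i hi]
end
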